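/- There exist n-vertex graphs with O(n) edges whose every EPG-representation requires a grid of width Ω(n) and height Ω(n), hence area Ω(n²). Specifically, if G is a bounded-degree graph with pathwidth Ω(n), then the graph G′ obtained by subdividing every edge of G once is triangle-free, has O(n) vertices and edges, has pathwidth Ω(n) (since G is a minor of G′), and therefore every EPG-representation of G′ has both Ω(n) rows and Ω(n) columns. -/

import Mathlib

/-- Two grid points are adjacent (at distance 1). -/
def adjPt (p q : ℤ × ℤ) : Prop :=
  (p.1 = q.1 ∧ (p.2 - q.2 = 1 ∨ q.2 - p.2 = 1)) ∨
  (p.2 = q.2 ∧ (p.1 - q.1 = 1 ∨ q.1 - p.1 = 1))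

/-- A (simple) path in the rectangular integer grid. -/
structure GridPath where
  len : ℕ
  pts : Fin (len + 1) → ℤ × ℤ
  adj : ∀ i : Fin len, adjPt (pts i.castSucc) (pts i.succ)
  inj : Function.Injective pts

/-- The set of grid-edges used by a grid path. -/
def GridPath.edges (P : GridPath) : Set (Sym2 (ℤ × ℤ)) :=
  {e | ∃ i : Fin P.len, e = s(P.pts i.castSucc, P.pts i.succ)}

/-- The set of grid-points used by a grid path. -/
def GridPath.points (P : GridPath) : Set (ℤ × ℤ) :=
  Set.range P.pts

/-- The grid path lies inside the `w × h` grid. -/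
def GridPath.InGrid (P : GridPath) (w h : ℕ) : Prop :=
  ∀ p ∈ P.points, 1 ≤ p.1 ∧ p.1 ≤ (w : ℤ) ∧ 1 ≤ p.2 ∧ p.2 ≤ (h : ℤ)

/-- An EPG-representation: vertices are adjacent iff their paths share a grid-edge. -/
def IsEPGRep {V : Type*} (G : SimpleGraph V) (rep : V → GridPath) : Prop :=
  ∀ v w : V, G.Adj v w ↔ v ≠ w ∧ ((rep v).edges ∩ (rep w).edges).Nonempty

/-!
Subdivide every edge of a sparse graph `G` that has no bipartite hole of size `s` (two disjoint
`s`-sets with no edge between them). The subdivision is triangle-free, so no grid edge is shared by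
three paths of an EPG-representation; as every path meeting a column uses one of the at most `4h`
grid edges at that column, at most `8h` column spans of paths contain any given column. Contracting
each vertex of `G` with the midpoints of some of its edges gives an interval model of `G` of ply at
most `8h`, and sweeping a vertical line across it shows `|V(G)| < 2s + 8h`. Transposing the grid
bounds the number of columns in the same way. A suitable `G` on `5M` vertices with `s = 2M` is the
union of the graphs of `8` random maps, found by a union bound, and of a fixed-point-free map.
-/

open Finset

lemma exists_eq_of_step_le_one {g : ℕ → ℤ} {a b : ℕ} (hab : a ≤ b)
    (hstep : ∀ i, a ≤ i → i < b → g (i + 1) ≤ g i + 1) {x : ℤ} (ha : g a ≤ x) (hb : x ≤ g b) :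
    ∃ i, a ≤ i ∧ i ≤ b ∧ g i = x := by
  induction b, hab using Nat.le_induction with
  | base => exact ⟨a, le_rfl, le_rfl, le_antisymm ha hb⟩
  | succ b hab ih =>
    by_cases hx : x ≤ g b
    · obtain ⟨i, hai, hib, hi⟩ := ih (fun i hai hib => hstep i hai (by omega)) hx
      exact ⟨i, hai, by omega, hi⟩
    · have := hstep b hab (by omega)
      exact ⟨b + 1, by omega, le_rfl, by omega⟩

lemma adjPt_comm {p q : ℤ × ℤ} : adjPt p q ↔ adjPt q p := by
  unfold adjPt; omega

lemma adjPt_swap {p q : ℤ × ℤ} : adjPt p.swap q.swap ↔ adjPt p q := by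
  unfold adjPt; simp only [Prod.fst_swap, Prod.snd_swap]; omega

def gridOffsets : Finset (ℤ × ℤ) := {(1, 0), (-1, 0), (0, 1), (0, -1)}

lemma sub_mem_gridOffsets_of_adjPt {p q : ℤ × ℤ} (h : adjPt p q) : q - p ∈ gridOffsets := by
  obtain ⟨p1, p2⟩ := p
  obtain ⟨q1, q2⟩ := q
  simp only [adjPt] at h
  simp only [gridOffsets, Prod.mk_sub_mk, mem_insert, mem_singleton, Prod.mk.injEq]
  omega

namespace GridPath

variable (P : GridPath)

def minCol : ℤ := univ.inf' univ_nonempty fun i => (P.pts i).1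

def maxCol : ℤ := univ.sup' univ_nonempty fun i => (P.pts i).1

variable {P}

lemma minCol_le {p : ℤ × ℤ} (hp : p ∈ P.points) : P.minCol ≤ p.1 := by
  obtain ⟨i, rfl⟩ := hp
  exact inf'_le _ (mem_univ i)

lemma le_maxCol {p : ℤ × ℤ} (hp : p ∈ P.points) : p.1 ≤ P.maxCol := by
  obtain ⟨i, rfl⟩ := hp
  exact le_sup' (fun i => (P.pts i).1) (mem_univ i)

lemma minCol_le_maxCol : P.minCol ≤ P.maxCol :=
  (minCol_le ⟨0, rfl⟩).trans (le_maxCol ⟨0, rfl⟩)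

lemma mem_points_of_mem_edges {e : Sym2 (ℤ × ℤ)} {p : ℤ × ℤ} (he : e ∈ P.edges) (hp : p ∈ e) :
    p ∈ P.points := by
  obtain ⟨i, rfl⟩ := he
  rcases Sym2.mem_iff.1 hp with rfl | rfl
  exacts [⟨_, rfl⟩, ⟨_, rfl⟩]

lemma exists_pts_fst_eq {x : ℤ} (h₁ : P.minCol ≤ x) (h₂ : x ≤ P.maxCol) :
    ∃ i, (P.pts i).1 = x := by
  let g : ℕ → ℤ := fun i => if h : i ≤ P.len then (P.pts ⟨i, by omega⟩).1 else 0
  have hg : ∀ i : Fin (P.len + 1), g i = (P.pts i).1 := fun i => dif_pos (by omega)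
  have hstep : ∀ i < P.len, g (i + 1) ≤ g i + 1 ∧ g i ≤ g (i + 1) + 1 := by
    intro i hi
    have : adjPt (P.pts ⟨i, by omega⟩) (P.pts ⟨i + 1, by omega⟩) := P.adj ⟨i, hi⟩
    simp only [g, dif_pos hi.le, dif_pos (Nat.succ_le_of_lt hi)]
    unfold adjPt at this
    omega
  obtain ⟨a, -, ha⟩ := exists_mem_eq_inf' univ_nonempty fun i => (P.pts i).1
  obtain ⟨b, -, hb⟩ := exists_mem_eq_sup' univ_nonempty fun i => (P.pts i).1
  rw [minCol, ha, ← hg] at h₁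
  rw [maxCol, hb, ← hg] at h₂
  suffices ∃ i ≤ P.len, g i = x by
    obtain ⟨i, hi, hgi⟩ := this
    exact ⟨⟨i, by omega⟩, (hg ⟨i, by omega⟩).symm.trans hgi⟩
  rcases le_total a.val b.val with hab | hab
  · obtain ⟨i, -, hib, hi⟩ := exists_eq_of_step_le_one hab
      (fun i _ hi => (hstep i (by omega)).1) h₁ h₂
    exact ⟨i, by omega, hi⟩
  · obtain ⟨i, -, hia, hi⟩ := exists_eq_of_step_le_one (g := fun i => -g i) hab
      (fun i _ hi => by have := (hstep i (by omega)).2; omega) (neg_le_neg h₂) (neg_le_neg h₁)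
    exact ⟨i, by omega, neg_inj.1 hi⟩

lemma exists_adjPt_mem_edges (hlen : 0 < P.len) (i : Fin (P.len + 1)) :
    ∃ q, adjPt (P.pts i) q ∧ s(P.pts i, q) ∈ P.edges := by
  rcases lt_or_eq_of_le (Nat.le_of_lt_succ i.isLt) with hi | hi
  · exact ⟨_, P.adj ⟨i, hi⟩, ⟨i, hi⟩, rfl⟩
  · have hi' : P.len - 1 < P.len := by omega
    have hsucc : (⟨P.len - 1, hi'⟩ : Fin P.len).succ = i := Fin.ext (by simp; omega)
    refine ⟨_, adjPt_comm.1 ?_, ⟨P.len - 1, hi'⟩, by rw [hsucc, Sym2.eq_swap]⟩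
    rw [← hsucc]
    exact P.adj _

def transpose : GridPath where
  len := P.len
  pts i := (P.pts i).swap
  adj i := adjPt_swap.2 (P.adj i)
  inj := Prod.swap_injective.comp P.inj

lemma edges_transpose : P.transpose.edges = Sym2.map Prod.swap '' P.edges := by
  ext e
  constructor
  · rintro ⟨i, rfl⟩
    exact ⟨_, ⟨i, rfl⟩, rfl⟩
  · rintro ⟨_, ⟨i, rfl⟩, rfl⟩
    exact ⟨i, rfl⟩

lemma InGrid.transpose {w h : ℕ} (hP : P.InGrid w h) : P.transpose.InGrid h w := by
  rintro _ ⟨i, rfl⟩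
  have := hP _ ⟨i, rfl⟩
  exact ⟨this.2.2.1, this.2.2.2, this.1, this.2.1⟩

end GridPath

noncomputable def columnEdges (x : ℤ) (h : ℕ) : Finset (Sym2 (ℤ × ℤ)) :=
  (Icc 1 (h : ℤ) ×ˢ gridOffsets).image fun p => s((x, p.1), (x, p.1) + p.2)

lemma card_columnEdges_le (x : ℤ) (h : ℕ) : #(columnEdges x h) ≤ 4 * h := by
  calc #(columnEdges x h) ≤ #(Icc 1 (h : ℤ) ×ˢ gridOffsets) := card_image_le
    _ ≤ h * 4 := by
      rw [card_product, Int.card_Icc, add_sub_cancel_right, Int.toNat_natCast]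
      exact Nat.mul_le_mul_left _ card_le_four
    _ = 4 * h := mul_comm _ _

lemma GridPath.exists_mem_edges_inter_columnEdges {P : GridPath} {w h : ℕ} (hP : P.InGrid w h)
    (hlen : 0 < P.len) {x : ℤ} (h₁ : P.minCol ≤ x) (h₂ : x ≤ P.maxCol) :
    ∃ e ∈ P.edges, e ∈ columnEdges x h := by
  obtain ⟨i, hi⟩ := P.exists_pts_fst_eq h₁ h₂
  obtain ⟨q, hq, hqe⟩ := P.exists_adjPt_mem_edges hlen i
  obtain ⟨-, -, hy₁, hy₂⟩ := hP _ ⟨i, rfl⟩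
  refine ⟨_, hqe, mem_image.2 ⟨((P.pts i).2, q - P.pts i), ?_, ?_⟩⟩
  · exact mem_product.2 ⟨mem_Icc.2 ⟨hy₁, hy₂⟩, sub_mem_gridOffsets_of_adjPt hq⟩
  · have hp : ((x, (P.pts i).2) : ℤ × ℤ) = P.pts i := Prod.ext hi.symm rfl
    simp only [hp, add_sub_cancel]

namespace SimpleGraph

variable {V : Type*} (G : SimpleGraph V)

/-- Since `G.Adj` is symmetric, this says that adjacent vertices get intersecting intervals
`[L v, R v]`. -/
def IsIntervalModel (L R : V → ℤ) : Prop :=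
  ∀ ⦃u v⦄, G.Adj u v → L v ≤ R u

def HasBipartiteHole (s : ℕ) : Prop :=
  ∃ A B : Finset V, #A = s ∧ #B = s ∧ Disjoint A B ∧ ∀ a ∈ A, ∀ b ∈ B, ¬ G.Adj a b

end SimpleGraph

def intervalPly {V : Type*} [Fintype V] (L R : V → ℤ) (x : ℤ) : ℕ :=
  #{v | L v ≤ x ∧ x ≤ R v}

namespace IsEPGRep

variable {V : Type*} {G : SimpleGraph V} {rep : V → GridPath}

lemma comp_embedding {W : Type*} {H : SimpleGraph W} (hrep : IsEPGRep G rep) (φ : H ↪g G) :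
    IsEPGRep H (rep ∘ φ) := by
  intro v w
  rw [← φ.map_adj_iff, hrep, φ.injective.ne_iff]
  rfl

lemma transpose (hrep : IsEPGRep G rep) : IsEPGRep G fun v => (rep v).transpose := by
  intro v w
  rw [hrep v w, GridPath.edges_transpose, GridPath.edges_transpose,
    ← Set.image_inter (Sym2.map.injective Prod.swap_injective), Set.image_nonempty]

lemma len_pos (hrep : IsEPGRep G rep) {v w : V} (h : G.Adj v w) : 0 < (rep v).len := by
  obtain ⟨-, -, ⟨i, -⟩, -⟩ := (hrep v w).1 h
  exact i.pos

lemma isIntervalModel (hrep : IsEPGRep G rep) :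
    G.IsIntervalModel (fun v => (rep v).minCol) (fun v => (rep v).maxCol) := by
  intro v w h
  obtain ⟨-, e, hv, hw⟩ := (hrep v w).1 h
  exact (GridPath.minCol_le (GridPath.mem_points_of_mem_edges hw e.out_fst_mem)).trans
    (GridPath.le_maxCol (GridPath.mem_points_of_mem_edges hv e.out_fst_mem))

open Classical in
lemma card_filter_mem_edges_le_two [Fintype V] (hG : G.CliqueFree 3) (hrep : IsEPGRep G rep)
    (e : Sym2 (ℤ × ℤ)) : #{v | e ∈ (rep v).edges} ≤ 2 := by
  by_contra! h
  obtain ⟨a, ha, b, hb, c, hc, hab, hac, hbc⟩ := two_lt_card.1 h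
  simp only [mem_filter, mem_univ, true_and] at ha hb hc
  have adj : ∀ {u v}, u ≠ v → e ∈ (rep u).edges → e ∈ (rep v).edges → G.Adj u v :=
    fun huv hu hv => (hrep _ _).2 ⟨huv, e, hu, hv⟩
  exact hG {a, b, c} (SimpleGraph.is3Clique_triple_iff.2
    ⟨adj hab ha hb, adj hac ha hc, adj hbc hb hc⟩)

lemma intervalPly_le [Fintype V] (hG : G.CliqueFree 3) (hrep : IsEPGRep G rep)
    (hlen : ∀ v, 0 < (rep v).len) {w h : ℕ} (hgrid : ∀ v, (rep v).InGrid w h) (x : ℤ) :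
    intervalPly (fun v => (rep v).minCol) (fun v => (rep v).maxCol) x ≤ 8 * h := by
  classical
  have hcover : ({v | (rep v).minCol ≤ x ∧ x ≤ (rep v).maxCol} : Finset V) ⊆
      (columnEdges x h).biUnion fun e => {v | e ∈ (rep v).edges} := by
    intro v hv
    obtain ⟨h₁, h₂⟩ := (mem_filter.1 hv).2
    obtain ⟨e, hev, hex⟩ := GridPath.exists_mem_edges_inter_columnEdges (hgrid v) (hlen v) h₁ h₂
    exact mem_biUnion.2 ⟨e, hex, mem_filter.2 ⟨mem_univ v, hev⟩⟩
  calc intervalPly _ _ x ≤ _ := card_le_card hcover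
    _ ≤ ∑ e ∈ columnEdges x h, #{v | e ∈ (rep v).edges} := card_biUnion_le
    _ ≤ ∑ _e ∈ columnEdges x h, 2 :=
      sum_le_sum fun e _ => hrep.card_filter_mem_edges_le_two hG e
    _ ≤ 8 * h := by
      rw [sum_const, smul_eq_mul]
      linarith [card_columnEdges_le x h]

end IsEPGRep

namespace SimpleGraph

variable {V : Type*} {G : SimpleGraph V}

/-- For the least `x₀` such that `s` intervals end at or before `x₀`, fewer than `s`
intervals start after `x₀`, as these two families would form a bipartite hole. -/
theorem IsIntervalModel.card_lt [Fintype V] {L R : V → ℤ} (hG : G.IsIntervalModel L R)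
    (hLR : ∀ v, L v ≤ R v) {s k : ℕ} (hs : ¬ G.HasBipartiteHole s)
    (hply : ∀ x, intervalPly L R x ≤ k) : Fintype.card V < 2 * s + k := by
  classical
  have hs₀ : 0 < s := Nat.pos_of_ne_zero fun h0 =>
    hs ⟨∅, ∅, by simp [h0], by simp [h0], disjoint_empty_left _, by simp⟩
  by_cases hV : Fintype.card V < s
  · omega
  obtain ⟨b, hb⟩ := (Set.finite_range R).bddBelow
  obtain ⟨c, hc⟩ := (Set.finite_range R).bddAbove
  obtain ⟨x₀, hx₀, hmin⟩ := Int.exists_least_of_bdd (P := fun z => s ≤ #{v | R v ≤ z})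
    ⟨b, fun z hz => by
      obtain ⟨v, hv⟩ := card_pos.1 (hs₀.trans_le hz)
      exact (hb ⟨v, rfl⟩).trans (mem_filter.1 hv).2⟩
    ⟨c, by rw [filter_true_of_mem fun v _ => hc ⟨v, rfl⟩, card_univ]; omega⟩
  have hbefore : #{v | R v ≤ x₀ - 1} < s := by
    by_contra! h
    linarith [hmin _ h]
  have hafter : #{v | x₀ < L v} < s := by
    by_contra! h
    obtain ⟨A, hA, hAs⟩ := exists_subset_card_eq hx₀
    obtain ⟨B, hB, hBs⟩ := exists_subset_card_eq h
    have hRA : ∀ a ∈ A, R a ≤ x₀ := fun a ha => (mem_filter.1 (hA ha)).2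
    have hLB : ∀ b ∈ B, x₀ < L b := fun b hb => (mem_filter.1 (hB hb)).2
    refine hs ⟨A, B, hAs, hBs, Finset.disjoint_left.2 fun a ha haB => ?_, fun a ha b hb hab => ?_⟩
    · linarith [hRA a ha, hLB a haB, hLR a]
    · linarith [hRA a ha, hLB b hb, hG hab]
  have hsplit : (univ : Finset V) ⊆
      ({v | R v ≤ x₀ - 1} : Finset V) ∪ ({v | L v ≤ x₀ ∧ x₀ ≤ R v} : Finset V) ∪
        ({v | x₀ < L v} : Finset V) := by
    intro v _
    simp only [mem_union, mem_filter, mem_univ, true_and]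
    omega
  calc Fintype.card V ≤ _ := card_le_card hsplit
    _ ≤ #{v | R v ≤ x₀ - 1} + intervalPly L R x₀ + #{v | x₀ < L v} :=
      (card_union_le _ _).trans (Nat.add_le_add_right (card_union_le _ _) _)
    _ < 2 * s + k := by linarith [hply x₀]

end SimpleGraph

/-- Merging the intervals in each fiber of `π` does not increase the ply, provided that every fiber
contains a centre whose interval meets all the others in the fiber. -/
lemma intervalPly_le_of_fibers {W V : Type*} [Fintype W] [Fintype V] (π : W → V)
    {L R : W → ℤ} {L' R' : V → ℤ} (hL' : ∀ v, ∃ a, π a = v ∧ L a = L' v)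
    (hR' : ∀ v, ∃ a, π a = v ∧ R a = R' v)
    (hcentre : ∀ v, ∃ c, π c = v ∧ ∀ a, π a = v → L c ≤ R a ∧ L a ≤ R c) (x : ℤ) :
    intervalPly L' R' x ≤ intervalPly L R x := by
  classical
  have hsub : ({v | L' v ≤ x ∧ x ≤ R' v} : Finset V) ⊆
      ({a | L a ≤ x ∧ x ≤ R a} : Finset W).image π := by
    intro v hv
    obtain ⟨h₁, h₂⟩ := (mem_filter.1 hv).2
    have hcover {a} (ha : π a = v) (h₁ : L a ≤ x) (h₂ : x ≤ R a) :
        v ∈ ({a | L a ≤ x ∧ x ≤ R a} : Finset W).image π :=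
      mem_image.2 ⟨a, mem_filter.2 ⟨mem_univ _, h₁, h₂⟩, ha⟩
    obtain ⟨γ, hγ, hLγ⟩ := hL' v
    obtain ⟨δ, hδ, hRδ⟩ := hR' v
    obtain ⟨c, hc, hmeet⟩ := hcentre v
    by_cases hγx : x ≤ R γ
    · exact hcover hγ (hLγ ▸ h₁) hγx
    by_cases hδx : L δ ≤ x
    · exact hcover hδ hδx (hRδ ▸ h₂)
    exact hcover hc (by linarith [(hmeet γ hγ).1]) (by linarith [(hmeet δ hδ).2])
  exact (card_le_card hsub).trans card_image_le

namespace SimpleGraph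

variable {V : Type*} {G : SimpleGraph V}

/-- `inr e` is the midpoint of the edge `e`. -/
def subdivision (G : SimpleGraph V) : SimpleGraph (V ⊕ G.edgeSet) where
  Adj
    | .inl v, .inr e => v ∈ (e : Sym2 V)
    | .inr e, .inl v => v ∈ (e : Sym2 V)
    | _, _ => False
  symm := ⟨by rintro (v | e) (w | f) h <;> exact h⟩
  loopless := ⟨by rintro (v | e) h <;> exact h⟩

@[simp] lemma subdivision_adj_inl_inr {v : V} {e : G.edgeSet} :
    G.subdivision.Adj (.inl v) (.inr e) ↔ v ∈ (e : Sym2 V) := Iff.rfl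

@[simp] lemma not_subdivision_adj_inl_inl {v w : V} : ¬ G.subdivision.Adj (.inl v) (.inl w) :=
  id

@[simp] lemma not_subdivision_adj_inr_inr {e f : G.edgeSet} :
    ¬ G.subdivision.Adj (.inr e) (.inr f) := id

lemma cliqueFree_three_subdivision : G.subdivision.CliqueFree 3 :=
  (Coloring.mk (fun a => a.isLeft) fun {a b} h => by
    rcases a with v | e <;> rcases b with w | f <;> simp_all).colorable.cliqueFree (by simp)

lemma exists_subdivision_adj (hG : ∀ v, ∃ w, G.Adj v w) (a : V ⊕ G.edgeSet) :
    ∃ b, G.subdivision.Adj a b := by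
  rcases a with v | e
  · obtain ⟨w, hvw⟩ := hG v
    exact ⟨.inr ⟨s(v, w), hvw⟩, Sym2.mem_mk_left v w⟩
  · exact ⟨.inl (e : Sym2 V).out.1, (e : Sym2 V).out_fst_mem⟩

lemma card_edgeSet_subdivision_le [Fintype V] :
    Nat.card G.subdivision.edgeSet ≤ 2 * Nat.card G.edgeSet := by
  classical
  let f : G.Dart → G.subdivision.edgeSet := fun d =>
    ⟨s(.inl d.fst, .inr ⟨d.edge, d.edge_mem⟩), Sym2.mem_mk_left _ _⟩
  have hf : Function.Surjective f := by
    rintro ⟨x, hx⟩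
    induction x using Sym2.ind with | _ a b => ?_
    rw [mem_edgeSet] at hx
    have key : ∀ (v : V) (e : G.edgeSet), v ∈ (e : Sym2 V) →
        ∃ d, (f d : Sym2 (V ⊕ G.edgeSet)) = s(.inl v, .inr e) := by
      intro v e hv
      have hadj : G.Adj v (Sym2.Mem.other hv) := by rw [← mem_edgeSet, Sym2.other_spec]; exact e.2
      exact ⟨⟨(v, _), hadj⟩, congrArg (fun e : G.edgeSet => s(Sum.inl v, Sum.inr e))
        (Subtype.ext (Sym2.other_spec hv))⟩
    rcases a with v | e <;> rcases b with w | f'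
    · exact (not_subdivision_adj_inl_inl hx).elim
    · obtain ⟨d, hd⟩ := key v f' hx
      exact ⟨d, Subtype.ext hd⟩
    · obtain ⟨d, hd⟩ := key w e hx
      exact ⟨d, Subtype.ext (hd.trans Sym2.eq_swap)⟩
    · exact (not_subdivision_adj_inr_inr hx).elim
  calc Nat.card G.subdivision.edgeSet ≤ Nat.card G.Dart := Nat.card_le_card_of_surjective f hf
    _ = 2 * Nat.card G.edgeSet := by
      rw [Nat.card_eq_fintype_card, dart_card_eq_twice_card_edges, Nat.card_eq_fintype_card,
        card_edgeSet]

/-- Contract every vertex `v` together with the midpoints of the edges `e` with `e.out.1 = v`;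
these midpoints are adjacent to `v`, so `v` is a centre of its fiber. -/
theorem IsIntervalModel.of_subdivision [Fintype V] [Fintype G.edgeSet]
    {L R : V ⊕ G.edgeSet → ℤ} (hG : G.subdivision.IsIntervalModel L R) (hLR : ∀ a, L a ≤ R a) :
    ∃ L' R' : V → ℤ, G.IsIntervalModel L' R' ∧ (∀ v, L' v ≤ R' v) ∧
      ∀ x, intervalPly L' R' x ≤ intervalPly L R x := by
  classical
  let owner : V ⊕ G.edgeSet → V := Sum.elim id fun e => (e : Sym2 V).out.1
  let fiber (v : V) : Finset (V ⊕ G.edgeSet) := {a | owner a = v}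
  have hmem {v a} (ha : owner a = v) : a ∈ fiber v := mem_filter.2 ⟨mem_univ a, ha⟩
  let L' (v : V) := (fiber v).inf' ⟨.inl v, hmem rfl⟩ L
  let R' (v : V) := (fiber v).sup' ⟨.inl v, hmem rfl⟩ R
  have hL' {v a} (ha : owner a = v) : L' v ≤ L a := inf'_le _ (hmem ha)
  have hR' {v a} (ha : owner a = v) : R a ≤ R' v := le_sup' _ (hmem ha)
  have hcentre {v a} (ha : owner a = v) : L (.inl v) ≤ R a ∧ L a ≤ R (.inl v) := by
    rcases a with u | e
    · obtain rfl : u = v := ha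
      exact ⟨hLR _, hLR _⟩
    · have hv : G.subdivision.Adj (.inl v) (.inr e) := by
        rw [subdivision_adj_inl_inr, ← ha]
        exact Sym2.out_fst_mem _
      exact ⟨hG hv.symm, hG hv⟩
  refine ⟨L', R', fun u v huv => ?_,
    fun v => (hL' (a := .inl v) rfl).trans ((hLR _).trans (hR' rfl)),
    intervalPly_le_of_fibers owner (fun v => ?_) (fun v => ?_)
      fun v => ⟨.inl v, rfl, fun a => hcentre⟩⟩
  · let e : G.edgeSet := ⟨s(u, v), huv⟩
    rcases Sym2.mem_iff.1 (Sym2.out_fst_mem (e : Sym2 V)) with h | h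
    · calc L' v ≤ L (.inl v) := hL' rfl
        _ ≤ R (.inr e) := hG (show G.subdivision.Adj (.inr e) (.inl v) from Sym2.mem_mk_right u v)
        _ ≤ R' u := hR' h
    · calc L' v ≤ L (.inr e) := hL' h
        _ ≤ R (.inl u) := hG (show G.subdivision.Adj (.inl u) (.inr e) from Sym2.mem_mk_left u v)
        _ ≤ R' u := hR' rfl
  · obtain ⟨a, ha, h⟩ := exists_mem_eq_inf' ⟨.inl v, hmem rfl⟩ L
    exact ⟨a, (mem_filter.1 ha).2, h.symm⟩
  · obtain ⟨a, ha, h⟩ := exists_mem_eq_sup' ⟨.inl v, hmem rfl⟩ R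
    exact ⟨a, (mem_filter.1 ha).2, h.symm⟩

theorem card_lt_of_isEPGRep_subdivision [Fintype V] [Fintype G.edgeSet]
    (hG : ∀ v, ∃ w, G.Adj v w) {s : ℕ} (hs : ¬ G.HasBipartiteHole s)
    {rep : V ⊕ G.edgeSet → GridPath} (hrep : IsEPGRep G.subdivision rep) {w h : ℕ}
    (hgrid : ∀ a, (rep a).InGrid w h) : Fintype.card V < 2 * s + 8 * h := by
  have hlen (a) : 0 < (rep a).len := by
    obtain ⟨b, hab⟩ := exists_subdivision_adj hG a
    exact hrep.len_pos hab
  obtain ⟨L, R, hmodel, hLR, hply⟩ := hrep.isIntervalModel.of_subdivision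
    fun a => (rep a).minCol_le_maxCol
  exact hmodel.card_lt hLR hs fun x => (hply x).trans
    (hrep.intervalPly_le cliqueFree_three_subdivision hlen hgrid x)

def ofMaps {ι α : Type*} (F : ι → α → α) : SimpleGraph α :=
  fromRel fun a b => ∃ i, F i a = b

lemma ofMaps_adj_apply {ι α : Type*} {F : ι → α → α} {i : ι} {a : α} (h : F i a ≠ a) :
    (ofMaps F).Adj a (F i a) :=
  ⟨h.symm, .inl ⟨i, rfl⟩⟩

lemma card_edgeSet_ofMaps_le {ι α : Type*} [Finite ι] [Finite α] (F : ι → α → α) :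
    Nat.card (ofMaps F).edgeSet ≤ Nat.card ι * Nat.card α := by
  let g : {p : ι × α // F p.1 p.2 ≠ p.2} → (ofMaps F).edgeSet := fun p =>
    ⟨s(p.1.2, F p.1.1 p.1.2), ofMaps_adj_apply p.2⟩
  have hg : Function.Surjective g := by
    rintro ⟨e, he⟩
    induction e using Sym2.ind with | _ a b => ?_
    rw [mem_edgeSet, ofMaps, fromRel_adj] at he
    obtain ⟨hab, ⟨i, rfl⟩ | ⟨i, rfl⟩⟩ := he
    · exact ⟨⟨(i, a), hab.symm⟩, rfl⟩
    · exact ⟨⟨(i, b), hab⟩, Subtype.ext Sym2.eq_swap⟩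
  calc Nat.card (ofMaps F).edgeSet ≤ Nat.card {p : ι × α // F p.1 p.2 ≠ p.2} :=
      Nat.card_le_card_of_surjective g hg
    _ ≤ Nat.card (ι × α) := Finite.card_subtype_le _
    _ = Nat.card ι * Nat.card α := Nat.card_prod ι α

lemma not_hasBipartiteHole_ofMaps {ι α : Type*} {F : ι → α → α} {s : ℕ}
    (hF : ∀ A B : Finset α, #A = s → #B = s → ∃ i, ∃ a ∈ A, F i a ∈ B) :
    ¬ (ofMaps F).HasBipartiteHole s := by
  rintro ⟨A, B, hA, hB, hAB, hnot⟩
  obtain ⟨i, a, ha, hb⟩ := hF A B hA hB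
  exact hnot a ha _ hb (ofMaps_adj_apply fun h => Finset.disjoint_left.1 hAB ha (h ▸ hb))

end SimpleGraph

/-- A union bound over the at most `4 ^ n` pairs `(A, B)`: a family of `d` uniformly random maps
sends no point of `A` into `B` with probability `((n - s) / n) ^ (s * d)`. -/
theorem exists_maps_forall_card_eq_exists_apply_mem (α : Type*) [Fintype α] {n : ℕ}
    (hn : Fintype.card α = n) (d s : ℕ) (h : 4 ^ n * ((n - s) ^ s * n ^ (n - s)) ^ d < n ^ (n * d)) :
    ∃ f : Fin d → α → α, ∀ A B : Finset α, #A = s → #B = s → ∃ j, ∃ a ∈ A, f j a ∈ B := by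
  classical
  let bad (p : Finset α × Finset α) : Finset (Fin d → α → α) :=
    Fintype.piFinset fun _ => Fintype.piFinset fun a => if a ∈ p.1 then p.2ᶜ else univ
  let pairs : Finset (Finset α × Finset α) := {p | #p.1 = s ∧ #p.2 = s}
  have hbad : ∀ p ∈ pairs, #(bad p) = ((n - s) ^ s * n ^ (n - s)) ^ d := by
    intro p hp
    obtain ⟨hA, hB⟩ := (mem_filter.1 hp).2
    simp only [bad, Fintype.card_piFinset, prod_const, card_univ, Fintype.card_fin, apply_ite card,
      card_compl, hB, hn]
    rw [prod_ite, prod_const, prod_const, ← compl_filter, card_compl, filter_mem_eq_inter,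
      univ_inter, hA, hn]
  have hpairs : #pairs ≤ 4 ^ n := by
    calc #pairs ≤ #(univ : Finset (Finset α × Finset α)) := card_le_univ _
      _ = 4 ^ n := by
        rw [card_univ, Fintype.card_prod, Fintype.card_finset, ← mul_pow, hn]; rfl
  have hcard : #(pairs.biUnion bad) < #(univ : Finset (Fin d → α → α)) := by
    calc #(pairs.biUnion bad) ≤ ∑ p ∈ pairs, #(bad p) := card_biUnion_le
      _ = #pairs * ((n - s) ^ s * n ^ (n - s)) ^ d := by
        rw [sum_congr rfl hbad, sum_const, smul_eq_mul]
      _ ≤ 4 ^ n * ((n - s) ^ s * n ^ (n - s)) ^ d := Nat.mul_le_mul_right _ hpairs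
      _ < _ := by
        rwa [card_univ, Fintype.card_fun, Fintype.card_fun, Fintype.card_fin, hn, ← pow_mul]
  obtain ⟨f, -, hf⟩ := exists_mem_notMem_of_card_lt_card hcard
  refine ⟨f, fun A B hA hB => ?_⟩
  have hfAB : f ∉ bad (A, B) := fun hfb =>
    hf (mem_biUnion.2 ⟨(A, B), mem_filter.2 ⟨mem_univ _, hA, hB⟩, hfb⟩)
  simp only [bad, Fintype.mem_piFinset, not_forall] at hfAB
  obtain ⟨j, a, ha⟩ := hfAB
  by_cases haA : a ∈ A
  · rw [if_pos haA, mem_compl, not_not] at ha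
    exact ⟨j, a, haA, ha⟩
  · exact absurd (mem_univ _) (by rwa [if_neg haA] at ha)

lemma four_pow_mul_lt_pow {M : ℕ} (hM : 0 < M) :
    4 ^ (5 * M) * ((5 * M - 2 * M) ^ (2 * M) * (5 * M) ^ (5 * M - 2 * M)) ^ 8 <
      (5 * M) ^ (5 * M * 8) := by
  rw [show 5 * M - 2 * M = 3 * M by omega]
  have base : 4 ^ 5 * ((3 * M) ^ 2 * (5 * M) ^ 3) ^ 8 < (5 * M) ^ 40 := by
    rw [show 4 ^ 5 * ((3 * M) ^ 2 * (5 * M) ^ 3) ^ 8 = (4 ^ 5 * 3 ^ 16 * 5 ^ 24) * M ^ 40 by ring,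
      show (5 * M) ^ 40 = 5 ^ 40 * M ^ 40 by ring]
    exact Nat.mul_lt_mul_of_pos_right (by norm_num) (by positivity)
  have regroup (a b c : ℕ) :
      a ^ (5 * M) * (b ^ (2 * M) * c ^ (3 * M)) ^ 8 = (a ^ 5 * (b ^ 2 * c ^ 3) ^ 8) ^ M := by ring
  have regroup' (c : ℕ) : c ^ (5 * M * 8) = (c ^ 40) ^ M := by ring
  rw [regroup, regroup']
  exact Nat.pow_lt_pow_left base hM.ne'

theorem exists_graph_not_hasBipartiteHole {M : ℕ} (hM : 0 < M) :
    ∃ G : SimpleGraph (Fin (5 * M)), (∀ v, ∃ w, G.Adj v w) ∧ ¬ G.HasBipartiteHole (2 * M) ∧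
      Nat.card G.edgeSet ≤ 45 * M := by
  obtain ⟨f, hf⟩ :=
    exists_maps_forall_card_eq_exists_apply_mem (Fin (5 * M)) (Fintype.card_fin _) 8 (2 * M)
      (four_pow_mul_lt_pow hM)
  have : Nontrivial (Fin (5 * M)) := Fin.nontrivial_iff_two_le.2 (by omega)
  obtain ⟨x, y, hxy⟩ := exists_pair_ne (Fin (5 * M))
  let F : Option (Fin 8) → Fin (5 * M) → Fin (5 * M) :=
    fun o => o.elim (fun a => if a = x then y else x) f
  refine ⟨SimpleGraph.ofMaps F, fun v => ⟨_, SimpleGraph.ofMaps_adj_apply (i := none) ?_⟩,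
    SimpleGraph.not_hasBipartiteHole_ofMaps fun A B hA hB => ?_, ?_⟩
  · by_cases hv : v = x
    · simpa [F, hv] using hxy.symm
    · simpa [F, hv] using Ne.symm hv
  · obtain ⟨j, a, ha, hb⟩ := hf A B hA hB
    exact ⟨some j, a, ha, hb⟩
  · refine (SimpleGraph.card_edgeSet_ofMaps_le F).trans ?_
    simp only [Nat.card_eq_fintype_card, Fintype.card_option, Fintype.card_fin]
    omega

/-- There are `n`-vertex graphs with `O(n)` edges whose every EPG-representation
needs a grid with `Ω(n)` rows and `Ω(n)` columns, hence `Ω(n²)` area. -/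
theorem stmt19 :
    ∃ C c : ℕ, 0 < c ∧ ∀ n₀ : ℕ, ∃ n, n₀ ≤ n ∧ ∃ G : SimpleGraph (Fin n),
      Nat.card G.edgeSet ≤ C * n ∧
      ∀ (w h : ℕ) (rep : Fin n → GridPath),
        IsEPGRep G rep → (∀ v, (rep v).InGrid w h) →
        n ≤ c * h ∧ n ≤ c * w := by
  classical
  refine ⟨2, 400, by norm_num, fun n₀ => ?_⟩
  obtain ⟨G, hG, hs, hE⟩ := exists_graph_not_hasBipartiteHole (M := n₀ + 1) (by omega)
  obtain ⟨n, hcard⟩ : ∃ n, Fintype.card (Fin (5 * (n₀ + 1)) ⊕ G.edgeSet) = n := ⟨_, rfl⟩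
  have hn : n = 5 * (n₀ + 1) + Nat.card G.edgeSet := by
    rw [← hcard, Fintype.card_sum, Fintype.card_fin, Nat.card_eq_fintype_card]
  let φ := G.subdivision.overFinIso hcard
  have hbound (w h : ℕ) (rep) (hrep : IsEPGRep (G.subdivision.overFin hcard) rep)
      (hgrid : ∀ v, (rep v).InGrid w h) : n ≤ 400 * h := by
    have := G.card_lt_of_isEPGRep_subdivision hG hs (hrep.comp_embedding φ.toEmbedding)
      fun a => hgrid _
    rw [Fintype.card_fin] at this
    omega
  refine ⟨n, by omega, G.subdivision.overFin hcard, ?_, fun w h rep hrep hgrid =>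
    ⟨hbound w h rep hrep hgrid, hbound h w _ hrep.transpose fun v => (hgrid v).transpose⟩⟩
  calc Nat.card (G.subdivision.overFin hcard).edgeSet = Nat.card G.subdivision.edgeSet :=
      Nat.card_congr φ.mapEdgeSet.symm
    _ ≤ 2 * Nat.card G.edgeSet := SimpleGraph.card_edgeSet_subdivision_le
    _ ≤ 2 * n := by omega
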